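/- arXiv:2512.05095 — 2 statements merged into one kernel-verified Lean document; each statement's English description precedes it below -/
import Mathlib

section
/- Let U be a free ℤ₂-module of rank 2, and let A, B ⊆ U be submodules each free of rank 1 with A ∩ B = {0} and such that A + B is of finite index (open) in U. Let β be a ℤ₂-module automorphism of U such that β(B) = B and (β - id)² = 0 in End(U). If β preserves some finite-index submodule of A (i.e., there exists a nonzero submodule A' ⊆ A with β(A') = A'), then β is the identity automorphism of U. -/
/-!
The endomorphism `N = β - 1` squares to zero, so it kills every vector `v` for which some nonzero
multiple of `N v` lies on the line through `v`: the "eigenvalue" `s` of such a `v` satisfies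
`s • N v = N (r • N v) = 0`. This applies to `c`, since `β` preserves `B`, and to `a`, since `β`
maps the nonzero multiple of `a` in `A'` back into `A`. Hence `N` vanishes on `A + B`, and as
`U ⧸ (A + B)` is finite and `U` is torsion-free over a ring of characteristic zero, `N = 0`.
-/

section

variable {R M : Type*} [CommRing R] [IsDomain R] [AddCommGroup M] [Module R M]
  [Module.IsTorsionFree R M]

theorem Module.End.apply_eq_zero_of_sq_eq_zero {N : Module.End R M} (hN : N ^ 2 = 0) {v : M}
    {r s : R} (hr : r ≠ 0) (hrs : r • N v = s • v) : N v = 0 := by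
  have hNN : N (N v) = 0 := by rw [← Module.End.mul_apply, ← sq, hN, LinearMap.zero_apply]
  have hs : s • N v = 0 := by rw [← map_smul, ← hrs, map_smul, hNN, smul_zero]
  rcases smul_eq_zero.mp hs with rfl | h
  · simpa [hr] using hrs
  · exact h

theorem LinearMap.eq_zero_of_le_ker_of_finite_quotient [CharZero R] {M' : Type*}
    [AddCommGroup M'] [Module R M'] {f : M' →ₗ[R] M} {P : Submodule R M'} [Finite (M' ⧸ P)]
    (hP : P ≤ LinearMap.ker f) : f = 0 := by
  ext y
  obtain ⟨n, hn, hny⟩ :=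
    (isOfFinAddOrder_of_finite (Submodule.Quotient.mk y : M' ⧸ P)).exists_nsmul_eq_zero
  rw [← Submodule.Quotient.mk_smul, Submodule.Quotient.mk_eq_zero] at hny
  have : (n : R) • f y = 0 := by rw [Nat.cast_smul_eq_nsmul, ← map_nsmul]; exact hP hny
  simpa [hn.ne'] using this

end

theorem stmt_4_general (U : Type*) [AddCommGroup U] [Module ℤ_[2] U]
    [Module.Free ℤ_[2] U]
    (a c : U)
    (A B : Submodule ℤ_[2] U)
    (hA : A = Submodule.span ℤ_[2] {a}) (hB : B = Submodule.span ℤ_[2] {c})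
    (hfin : Finite (U ⧸ (A ⊔ B)))
    (β : U ≃ₗ[ℤ_[2]] U)
    (hβB : B.map (β : U →ₗ[ℤ_[2]] U) = B)
    (hsq : ((β : Module.End ℤ_[2] U) - 1) ^ 2 = 0)
    (hstab : ∃ A' : Submodule ℤ_[2] U, A' ≤ A ∧ A' ≠ ⊥ ∧
      A'.map (β : U →ₗ[ℤ_[2]] U) = A') :
    β = 1 := by
  set N : Module.End ℤ_[2] U := (β : Module.End ℤ_[2] U) - 1
  subst hA hB
  obtain ⟨u, hu⟩ := Submodule.mem_span_singleton.mp
    (hβB ▸ Submodule.mem_map_of_mem (Submodule.mem_span_singleton_self c))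
  have hNc : N c = 0 := N.apply_eq_zero_of_sq_eq_zero hsq one_ne_zero (s := u - 1) <| by
    simp [N, sub_smul, hu]
  obtain ⟨A', hA'A, hA'0, hβA'⟩ := hstab
  obtain ⟨x, hxA', hx0⟩ := Submodule.exists_mem_ne_zero_of_ne_bot hA'0
  obtain ⟨t, rfl⟩ := Submodule.mem_span_singleton.mp (hA'A hxA')
  obtain ⟨s, hs⟩ := Submodule.mem_span_singleton.mp
    (hA'A (hβA' ▸ Submodule.mem_map_of_mem hxA'))
  have hNa : N a = 0 := N.apply_eq_zero_of_sq_eq_zero hsq (r := t) (s := s - t)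
    (by rintro rfl; simp at hx0) <| by
    rw [← map_smul, sub_smul, hs]; rfl
  have hN : N = 0 := LinearMap.eq_zero_of_le_ker_of_finite_quotient <| sup_le
    (Submodule.span_singleton_le_iff_mem _ _ |>.mpr hNa)
    (Submodule.span_singleton_le_iff_mem _ _ |>.mpr hNc)
  ext x
  simpa [N, sub_eq_zero] using LinearMap.congr_fun hN x

theorem stmt_4 (U : Type*) [AddCommGroup U] [Module ℤ_[2] U]
    [Module.Free ℤ_[2] U] [Module.Finite ℤ_[2] U]
    (hrk : Module.finrank ℤ_[2] U = 2)
    (a c : U) (ha : a ≠ 0) (hc : c ≠ 0)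
    (A B : Submodule ℤ_[2] U)
    (hA : A = Submodule.span ℤ_[2] {a}) (hB : B = Submodule.span ℤ_[2] {c})
    (hAB : A ⊓ B = ⊥) (hfin : Finite (U ⧸ (A ⊔ B)))
    (β : U ≃ₗ[ℤ_[2]] U)
    (hβB : B.map (β : U →ₗ[ℤ_[2]] U) = B)
    (hsq : ((β : Module.End ℤ_[2] U) - 1) ^ 2 = 0)
    (hstab : ∃ A' : Submodule ℤ_[2] U, A' ≤ A ∧ A' ≠ ⊥ ∧
      A'.map (β : U →ₗ[ℤ_[2]] U) = A') :
    β = 1 :=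
  stmt_4_general U a c A B hA hB hfin β hβB hsq hstab
end

section
/- Let U be a free ℤ₂-module of rank 2 and β a ℤ₂-linear automorphism of U with β ≠ id and (β - id)² = 0. Let A ⊆ U be a rank-1 free submodule such that β does not preserve any nonzero submodule of A. Then β(A) ∩ A = {0}. -/
/-! If `c • β a = d • a` with `c ≠ 0`, put `N = β - 1`. Then `c • N a = (d - c) • a`, and applying
`N` (with `N² = 0`) gives `(d - c) • N a = 0`; either way torsion-freeness forces `N a = 0`. So
`β` fixes `a`, hence stabilises `A` itself, which the hypothesis forbids. -/

namespace Module.End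

variable {R M : Type*} [CommRing R] [IsDomain R] [AddCommGroup M] [Module R M]
  [Module.IsTorsionFree R M] {f : Module.End R M}

theorem apply_eq_self_of_smul_mem_span_singleton (hf : (f - 1) ^ 2 = 0) {a : M} {c : R}
    (hc : c ≠ 0) (h : c • f a ∈ R ∙ a) : f a = a := by
  obtain ⟨d, hd⟩ := Submodule.mem_span_singleton.mp h
  set N := f - 1
  have hNa : c • N a = (d - c) • a := by
    simp only [N, LinearMap.sub_apply, one_apply, smul_sub, sub_smul, hd]
  have hNNa : (d - c) • N a = 0 := by
    rw [← map_smul, ← hNa, map_smul, ← mul_apply, ← sq, hf, LinearMap.zero_apply,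
      smul_zero]
  suffices N a = 0 by rwa [LinearMap.sub_apply, one_apply, sub_eq_zero] at this
  rcases smul_eq_zero.mp hNNa with hdc | hNa0
  · rw [hdc, zero_smul] at hNa
    exact (smul_eq_zero.mp hNa).resolve_left hc
  · exact hNa0

theorem apply_eq_self_of_map_span_singleton_inf_ne_bot (hf : (f - 1) ^ 2 = 0) {a : M}
    (h : (R ∙ a).map f ⊓ (R ∙ a) ≠ ⊥) : f a = a := by
  obtain ⟨x, hx, hx0⟩ := Submodule.exists_mem_ne_zero_of_ne_bot h
  obtain ⟨y, hy, rfl⟩ := Submodule.mem_map.mp (Submodule.mem_inf.mp hx).1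
  obtain ⟨c, rfl⟩ := Submodule.mem_span_singleton.mp hy
  refine apply_eq_self_of_smul_mem_span_singleton hf (c := c) ?_ ?_
  · rintro rfl
    simp at hx0
  · simpa using (Submodule.mem_inf.mp hx).2

end Module.End

theorem stmt_5_general (U : Type*) [AddCommGroup U] [Module ℤ_[2] U]
    [Module.Free ℤ_[2] U]
    (β : U ≃ₗ[ℤ_[2]] U)
    (hsq : ((β : Module.End ℤ_[2] U) - 1) ^ 2 = 0)
    (a : U) (A : Submodule ℤ_[2] U)
    (hA : A = Submodule.span ℤ_[2] {a})
    (hstab : ∀ A' : Submodule ℤ_[2] U, A' ≤ A → A' ≠ ⊥ →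
      A'.map (β : U →ₗ[ℤ_[2]] U) ≠ A') :
    A.map (β : U →ₗ[ℤ_[2]] U) ⊓ A = ⊥ := by
  by_contra h
  have hβa : β a = a := by
    subst hA
    exact Module.End.apply_eq_self_of_map_span_singleton_inf_ne_bot hsq h
  refine hstab A le_rfl (ne_bot_of_le_ne_bot h inf_le_right) ?_
  rw [hA, Submodule.map_span, Set.image_singleton, LinearEquiv.coe_coe, hβa]

theorem stmt_5 (U : Type*) [AddCommGroup U] [Module ℤ_[2] U]
    [Module.Free ℤ_[2] U] [Module.Finite ℤ_[2] U]
    (hrk : Module.finrank ℤ_[2] U = 2)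
    (β : U ≃ₗ[ℤ_[2]] U) (hβ : β ≠ 1)
    (hsq : ((β : Module.End ℤ_[2] U) - 1) ^ 2 = 0)
    (a : U) (ha : a ≠ 0) (A : Submodule ℤ_[2] U)
    (hA : A = Submodule.span ℤ_[2] {a})
    (hstab : ∀ A' : Submodule ℤ_[2] U, A' ≤ A → A' ≠ ⊥ →
      A'.map (β : U →ₗ[ℤ_[2]] U) ≠ A') :
    A.map (β : U →ₗ[ℤ_[2]] U) ⊓ A = ⊥ :=
  stmt_5_general U β hsq a A hA hstab
end
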